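/- arXiv:0811.3171 — 4 statements merged into one kernel-verified Lean document; each statement's English description precedes it below -/
import Mathlib

section
/- The map λ ↦ |h(λ)⟩ := √(1 − f(λ)² − g(λ)²)|nothing⟩ + f(λ)|well⟩ + g(λ)|ill⟩ (a unit vector in ℝ³ with the three orthonormal basis vectors |nothing⟩, |well⟩, |ill⟩) is (π/2)κ-Lipschitz: for all λ₁, λ₂ in (0, 1], ‖|h(λ₁)⟩ − |h(λ₂)⟩‖ ≤ (π/2)·κ·|λ₁ − λ₂|. -/
open Real

/-- The HHL filter function `f` with parameter `κ` and `κ' = 2κ`. -/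
noncomputable def hhlF (κ l : ℝ) : ℝ :=
  if 1/κ ≤ l then 1/(2*κ*l)
  else if 1/(2*κ) ≤ l then
    (1/2) * Real.sin ((Real.pi/2) * ((l - 1/(2*κ)) / (1/κ - 1/(2*κ))))
  else 0

/-- The HHL filter function `g` with parameter `κ` and `κ' = 2κ`. -/
noncomputable def hhlG (κ l : ℝ) : ℝ :=
  if 1/κ ≤ l then 0
  else if 1/(2*κ) ≤ l then
    (1/2) * Real.cos ((Real.pi/2) * ((l - 1/(2*κ)) / (1/κ - 1/(2*κ))))
  else 1/2

/-- The unit vector `|h(λ)⟩ = √(1 − f(λ)² − g(λ)²)|nothing⟩ + f(λ)|well⟩ + g(λ)|ill⟩`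
in `ℝ³` (with `|nothing⟩, |well⟩, |ill⟩` the standard orthonormal basis). -/
noncomputable def hhlH (κ l : ℝ) : EuclideanSpace ℝ (Fin 3) :=
  (WithLp.equiv 2 (Fin 3 → ℝ)).symm
    ![Real.sqrt (1 - hhlF κ l ^ 2 - hhlG κ l ^ 2), hhlF κ l, hhlG κ l]

open Set

/-!
On `(-∞, 1/(2κ)]` the vector `h` is constant. On `[1/(2κ), 1/κ]` its first coordinate is the
constant `√3/2` while `(f, g) = ½ (-cos πκλ, sin πκλ)` runs along a circle of radius `½` at angular
speed `πκ`, which gives exactly the constant `πκ/2`. On `[1/κ, ∞)` we have `g = 0`, and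
`f = 1/(2κλ) ≤ 1/2` is `κ/2`-Lipschitz; since `f ≤ √(1 - f²)` there, `√(1 - f²)` is as well,
and `√2 · κ/2 ≤ πκ/2`. Lipschitz bounds with a common constant on adjacent closed intervals
glue by the triangle inequality at the common endpoint.
-/

theorem LipschitzOnWith.union_of_le_of_ge {E : Type*} [PseudoMetricSpace E] {φ : ℝ → E}
    {K : NNReal} {s t : Set ℝ} {b : ℝ} (hs : LipschitzOnWith K φ s)
    (ht : LipschitzOnWith K φ t) (hbs : b ∈ s) (hbt : b ∈ t) (hs_le : ∀ x ∈ s, x ≤ b)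
    (ht_ge : ∀ y ∈ t, b ≤ y) : LipschitzOnWith K φ (s ∪ t) := by
  have cross : ∀ x ∈ s, ∀ y ∈ t, dist (φ x) (φ y) ≤ K * dist x y := fun x hx y hy =>
    calc dist (φ x) (φ y) ≤ dist (φ x) (φ b) + dist (φ b) (φ y) := dist_triangle _ _ _
      _ ≤ K * dist x b + K * dist b y :=
        add_le_add (hs.dist_le_mul x hx b hbs) (ht.dist_le_mul b hbt y hy)
      _ = K * dist x y := by
        have := hs_le x hx; have := ht_ge y hy
        rw [Real.dist_eq, Real.dist_eq, Real.dist_eq, abs_of_nonpos (by linarith),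
          abs_of_nonpos (by linarith), abs_of_nonpos (by linarith)]
        ring
  refine LipschitzOnWith.of_dist_le_mul fun x hx y hy => ?_
  rcases hx with hx | hx <;> rcases hy with hy | hy
  · exact hs.dist_le_mul x hx y hy
  · exact cross x hx y hy
  · rw [dist_comm, dist_comm x]
    exact cross y hy x hx
  · exact ht.dist_le_mul x hx y hy

theorem Real.sq_cos_sub_cos_add_sq_sin_sub_sin_le (x y : ℝ) :
    (cos x - cos y) ^ 2 + (sin x - sin y) ^ 2 ≤ (x - y) ^ 2 := by
  have h := one_sub_sq_div_two_le_cos (x := x - y)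
  rw [cos_sub] at h
  nlinarith [sin_sq_add_cos_sq x, sin_sq_add_cos_sq y]

theorem sq_sqrt_one_sub_sq_sub_le {x y : ℝ} (hx : 0 ≤ x) (hy : 0 ≤ y) (hx2 : x ^ 2 ≤ 1 / 2)
    (hy2 : y ^ 2 ≤ 1 / 2) : (√(1 - x ^ 2) - √(1 - y ^ 2)) ^ 2 ≤ (x - y) ^ 2 := by
  set a := √(1 - x ^ 2)
  set b := √(1 - y ^ 2)
  have ha : a ^ 2 = 1 - x ^ 2 := sq_sqrt (by linarith)
  have hb : b ^ 2 = 1 - y ^ 2 := sq_sqrt (by linarith)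
  have hxa : x ≤ a := le_sqrt_of_sq_le (by linarith)
  have hyb : y ≤ b := le_sqrt_of_sq_le (by linarith)
  -- `a - b = (y² - x²) / (a + b)` and `x + y ≤ a + b`
  have key : (a - b) ^ 2 * (a + b) ^ 2 ≤ (x - y) ^ 2 * (a + b) ^ 2 :=
    calc (a - b) ^ 2 * (a + b) ^ 2 = (x - y) ^ 2 * (x + y) ^ 2 := by
          linear_combination (a ^ 2 - b ^ 2 + y ^ 2 - x ^ 2) * (ha - hb)
      _ ≤ (x - y) ^ 2 * (a + b) ^ 2 := by gcongr
  have hab : 0 < a + b := add_pos_of_pos_of_nonneg (sqrt_pos.2 (by linarith)) (sqrt_nonneg _)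
  exact le_of_mul_le_mul_right key (by positivity)

theorem abs_inv_sub_inv_le {a x y : ℝ} (ha : 0 < a) (hx : a ≤ x) (hy : a ≤ y) :
    |x⁻¹ - y⁻¹| ≤ |x - y| / a ^ 2 := by
  have h := dist_inv_inv₀ (ha.trans_le hx).ne' (ha.trans_le hy).ne'
  rw [Real.dist_eq, Real.dist_eq, Real.norm_eq_abs, Real.norm_eq_abs,
    abs_of_pos (ha.trans_le hx), abs_of_pos (ha.trans_le hy)] at h
  rw [h, sq]
  gcongr
  exact ha.le.trans hx

noncomputable def hhlA (κ l : ℝ) : ℝ := √(1 - hhlF κ l ^ 2 - hhlG κ l ^ 2)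

theorem dist_hhlH_sq (κ l₁ l₂ : ℝ) : dist (hhlH κ l₁) (hhlH κ l₂) ^ 2 =
    (hhlA κ l₁ - hhlA κ l₂) ^ 2 + (hhlF κ l₁ - hhlF κ l₂) ^ 2 + (hhlG κ l₁ - hhlG κ l₂) ^ 2 := by
  simp [EuclideanSpace.dist_sq_eq, Fin.sum_univ_three, hhlH, hhlA, Real.dist_eq, sq_abs, add_assoc]

theorem hhlH_lipschitzOnWith_of_sq_le {κ : ℝ} (hκ : 0 ≤ κ) {s : Set ℝ}
    (h : ∀ x ∈ s, ∀ y ∈ s, (hhlA κ x - hhlA κ y) ^ 2 + (hhlF κ x - hhlF κ y) ^ 2 +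
      (hhlG κ x - hhlG κ y) ^ 2 ≤ (π / 2 * κ * (x - y)) ^ 2) :
    LipschitzOnWith (π / 2 * κ).toNNReal (hhlH κ) s := by
  refine LipschitzOnWith.of_dist_le_mul fun x hx y hy => ?_
  rw [Real.coe_toNNReal _ (by positivity), Real.dist_eq]
  refine (sq_le_sq₀ dist_nonneg (by positivity)).1 ?_
  rw [dist_hhlH_sq, mul_pow, sq_abs, ← mul_pow]
  exact h x hx y hy

section

variable {κ l : ℝ}

theorem hhlF_hhlG_of_le_one_div_two_mul (hκ : 0 < κ) (hl : l ≤ 1 / (2 * κ)) :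
    hhlF κ l = 0 ∧ hhlG κ l = 1 / 2 := by
  have hlt : ¬1 / κ ≤ l := (hl.trans_lt (by gcongr; linarith)).not_ge
  rw [hhlF, hhlG, if_neg hlt, if_neg hlt]
  rcases hl.lt_or_eq with hl | rfl
  · rw [if_neg hl.not_ge, if_neg hl.not_ge]
    exact ⟨rfl, rfl⟩
  · simp

theorem hhlF_hhlG_of_mem_Icc (hκ : 0 < κ) (hl : l ∈ Icc (1 / (2 * κ)) (1 / κ)) :
    hhlF κ l = -cos (π * κ * l) / 2 ∧ hhlG κ l = sin (π * κ * l) / 2 := by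
  rcases hl.2.lt_or_eq with hlt | rfl
  · have harg : π / 2 * ((l - 1 / (2 * κ)) / (1 / κ - 1 / (2 * κ))) = π * κ * l - π / 2 := by
      field_simp; ring
    simp only [hhlF, hhlG, hlt.not_ge, hl.1, if_true, if_false, harg, sin_sub_pi_div_two,
      cos_sub_pi_div_two]
    constructor <;> ring
  · have : π * κ * (1 / κ) = π := by field_simp
    rw [hhlF, hhlG, if_pos le_rfl, if_pos le_rfl, this, cos_pi, sin_pi]
    constructor
    · field_simp
    · simp

theorem hhlF_hhlG_of_one_div_le (hl : 1 / κ ≤ l) : hhlF κ l = (2 * κ * l)⁻¹ ∧ hhlG κ l = 0 := by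
  rw [hhlF, hhlG, if_pos hl, if_pos hl, one_div]
  exact ⟨rfl, rfl⟩

end

theorem hhlH_lipschitzOnWith_Iic {κ : ℝ} (hκ : 0 < κ) :
    LipschitzOnWith (π / 2 * κ).toNNReal (hhlH κ) (Iic (1 / (2 * κ))) :=
  hhlH_lipschitzOnWith_of_sq_le hκ.le fun x hx y hy => by
    obtain ⟨hfx, hgx⟩ := hhlF_hhlG_of_le_one_div_two_mul hκ hx
    obtain ⟨hfy, hgy⟩ := hhlF_hhlG_of_le_one_div_two_mul hκ hy
    simpa [hhlA, hfx, hgx, hfy, hgy] using sq_nonneg (π / 2 * κ * (x - y))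

theorem hhlH_lipschitzOnWith_Icc {κ : ℝ} (hκ : 0 < κ) :
    LipschitzOnWith (π / 2 * κ).toNNReal (hhlH κ) (Icc (1 / (2 * κ)) (1 / κ)) := by
  refine hhlH_lipschitzOnWith_of_sq_le hκ.le fun x hx y hy => ?_
  obtain ⟨hfx, hgx⟩ := hhlF_hhlG_of_mem_Icc hκ hx
  obtain ⟨hfy, hgy⟩ := hhlF_hhlG_of_mem_Icc hκ hy
  have hA : ∀ l ∈ Icc (1 / (2 * κ)) (1 / κ), hhlA κ l = √(3 / 4) := fun l hl => by
    obtain ⟨hf, hg⟩ := hhlF_hhlG_of_mem_Icc hκ hl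
    rw [hhlA, hf, hg]
    congr 1
    linear_combination (-1 / 4 : ℝ) * sin_sq_add_cos_sq (π * κ * l)
  rw [hA x hx, hA y hy, hfx, hgx, hfy, hgy]
  have := sq_cos_sub_cos_add_sq_sin_sub_sin_le (π * κ * x) (π * κ * y)
  linear_combination this / 4

theorem hhlH_lipschitzOnWith_Ici {κ : ℝ} (hκ : 0 < κ) :
    LipschitzOnWith (π / 2 * κ).toNNReal (hhlH κ) (Ici (1 / κ)) := by
  have two_le : ∀ l ∈ Ici (1 / κ), 2 ≤ 2 * κ * l := fun l hl => by
    linarith [(div_le_iff₀' hκ).1 hl]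
  have inv_bounds : ∀ l ∈ Ici (1 / κ), 0 ≤ (2 * κ * l)⁻¹ ∧ ((2 * κ * l)⁻¹) ^ 2 ≤ 1 / 2 :=
    fun l hl => by
      have : (2 * κ * l)⁻¹ ≤ 1 / 2 := by rw [one_div]; gcongr; exact two_le l hl
      have : 0 < (2 * κ * l)⁻¹ := inv_pos.2 (by linarith [two_le l hl])
      exact ⟨this.le, by nlinarith⟩
  have hA : ∀ l ∈ Ici (1 / κ), hhlA κ l = √(1 - ((2 * κ * l)⁻¹) ^ 2) := fun l hl => by
    obtain ⟨hf, hg⟩ := hhlF_hhlG_of_one_div_le hl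
    rw [hhlA, hf, hg]
    congr 1
    ring
  refine hhlH_lipschitzOnWith_of_sq_le hκ.le fun x hx y hy => ?_
  obtain ⟨hfx, hgx⟩ := hhlF_hhlG_of_one_div_le hx
  obtain ⟨hfy, hgy⟩ := hhlF_hhlG_of_one_div_le hy
  rw [hA x hx, hA y hy, hfx, hgx, hfy, hgy]
  have hΔf : ((2 * κ * x)⁻¹ - (2 * κ * y)⁻¹) ^ 2 ≤ (κ * (x - y)) ^ 2 / 4 :=
    calc _ = |(2 * κ * x)⁻¹ - (2 * κ * y)⁻¹| ^ 2 := (sq_abs _).symm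
      _ ≤ (|2 * κ * x - 2 * κ * y| / 2 ^ 2) ^ 2 := by
        gcongr; exact abs_inv_sub_inv_le two_pos (two_le x hx) (two_le y hy)
      _ = (κ * (x - y)) ^ 2 / 4 := by rw [div_pow, sq_abs]; ring
  have hΔA := sq_sqrt_one_sub_sq_sub_le (inv_bounds x hx).1 (inv_bounds y hy).1
    (inv_bounds x hx).2 (inv_bounds y hy).2
  have hπ : 2 * ((κ * (x - y)) ^ 2 / 4) ≤ (π / 2 * κ * (x - y)) ^ 2 := by
    rw [show (π / 2 * κ * (x - y)) ^ 2 = π ^ 2 * ((κ * (x - y)) ^ 2 / 4) by ring]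
    gcongr
    nlinarith [pi_gt_three]
  linarith

theorem hhlH_lipschitzWith {κ : ℝ} (hκ : 0 < κ) : LipschitzWith (π / 2 * κ).toNNReal (hhlH κ) := by
  have hle : 1 / (2 * κ) ≤ 1 / κ := by gcongr; linarith
  have h := ((hhlH_lipschitzOnWith_Iic hκ).union_of_le_of_ge (hhlH_lipschitzOnWith_Icc hκ)
    self_mem_Iic (left_mem_Icc.2 hle) (fun _ hx => hx) (fun _ hy => hy.1)).union_of_le_of_ge
    (hhlH_lipschitzOnWith_Ici hκ) (Or.inr (right_mem_Icc.2 hle)) self_mem_Ici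
    (fun _ hx => hx.elim (fun hx => hx.trans hle) (fun hx => hx.2)) (fun _ hy => hy)
  rwa [Iic_union_Icc_eq_Iic hle, Iic_union_Ici, lipschitzOnWith_univ] at h

theorem hhlH_lipschitz (κ : ℝ) (hκ : 1 ≤ κ) :
    ∀ l₁ l₂ : ℝ, 0 < l₁ → l₁ ≤ 1 → 0 < l₂ → l₂ ≤ 1 →
      ‖hhlH κ l₁ - hhlH κ l₂‖ ≤ (Real.pi / 2) * κ * |l₁ - l₂| := by
  intro l₁ l₂ _ _ _ _
  have hκ₀ : 0 < κ := by linarith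
  have h := (hhlH_lipschitzWith hκ₀).dist_le_mul l₁ l₂
  rwa [dist_eq_norm, Real.coe_toNNReal _ (by positivity), Real.dist_eq] at h
end

section
/- For λ ≥ 1/κ with λ ≤ 1 and any λ̃ > 0, the filter function f(λ) = 1/(2κλ) (extended as in the HHL definition for smaller arguments) satisfies |f(λ) − f(λ̃)| ≤ |λ − λ̃|/λ. -/
open Real

theorem hhlF_rel_lipschitz (κ l lt : ℝ) (hκ : 1 ≤ κ)
    (hl₁ : 1/κ ≤ l) (hl₂ : l ≤ 1) (hlt : 0 < lt) :
    |hhlF κ l - hhlF κ lt| ≤ |l - lt| / l := by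
  have hκ0 : (0:ℝ) < κ := by linarith
  have hl0 : (0:ℝ) < l := lt_of_lt_of_le (by positivity) hl₁
  have hκl : 1 ≤ κ * l := by
    rw [mul_comm]; exact (div_le_iff₀ hκ0).mp hl₁
  have hinv : 1/(2*κ*l) * l = 1/(2*κ) := by field_simp
  have h2κ : 2 * (1/(2*κ)) = 1/κ := by field_simp
  rw [show hhlF κ l = 1/(2*κ*l) from by rw [hhlF, if_pos hl₁]]
  unfold hhlF
  by_cases h1 : 1/κ ≤ lt
  · rw [if_pos h1]
    have hκlt : 1 ≤ κ * lt := by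
      rw [mul_comm]; exact (div_le_iff₀ hκ0).mp h1
    have heq : 1/(2*κ*l) - 1/(2*κ*lt) = (lt - l) / (2*κ*l*lt) := by
      field_simp
    rw [heq, abs_div, abs_of_pos (show (0:ℝ) < 2*κ*l*lt by positivity), abs_sub_comm]
    exact div_le_div_of_nonneg_left (abs_nonneg _) hl0 (by nlinarith)
  · push_neg at h1
    rw [if_neg (not_le.mpr h1)]
    have hltl : lt < l := lt_of_lt_of_le h1 hl₁
    have habs : |l - lt| = l - lt := abs_of_pos (by linarith)
    rw [habs]
    by_cases h2 : 1/(2*κ) ≤ lt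
    · rw [if_pos h2]
      have hd : 1/κ - 1/(2*κ) = 1/(2*κ) := by field_simp; ring
      rw [hd]
      set x : ℝ := (lt - 1/(2*κ)) / (1/(2*κ)) with hxdef
      have hx : x = 2*κ*lt - 1 := by
        rw [hxdef]; field_simp
      have hx0 : 0 ≤ x := div_nonneg (by linarith) (by positivity)
      have hx1 : x ≤ 1 := by
        rw [div_le_one (by positivity)]
        linarith
      have hs2 : x ≤ Real.sin (Real.pi/2 * x) := by
        have h := Real.mul_le_sin (x := Real.pi/2 * x) (by positivity)
          (by nlinarith [Real.pi_pos])
        calc x = 2 / Real.pi * (Real.pi/2 * x) := by field_simp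
          _ ≤ Real.sin (Real.pi/2 * x) := h
      have hs1 : Real.sin (Real.pi/2 * x) ≤ 1 := Real.sin_le_one _
      rw [abs_le]
      constructor
      · rw [neg_le, le_div_iff₀ hl0]
        nlinarith [mul_nonneg (sub_nonneg.mpr hs1) hl0.le]
      · rw [le_div_iff₀ hl0]
        nlinarith [mul_nonneg (sub_nonneg.mpr hs2) hl0.le,
          mul_nonneg (mul_nonneg hκ0.le hlt.le) (sub_nonneg.mpr hl₁)]
    · rw [if_neg h2, sub_zero]
      push_neg at h2
      rw [abs_of_pos (by positivity), le_div_iff₀ hl0, hinv]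
      linarith
end

section
/- Let A ∈ ℂ^{M×N} with M ≤ N and SVD A = Σ_j λ_j |u_j⟩⟨v_j| with all λ_j > 0, and H = [[0, A],[A†, 0]]. For b = Σ_j β_j u_j ∈ ℂ^M, applying the pseudoinverse of H to (b, 0) ∈ ℂ^{M+N} yields (0, x) where x = Σ_j β_j λ_j^{−1} v_j; moreover x is the minimum-norm solution of Ax = b. -/
open Matrix

private lemma dot_sum {n m : Type*} [Fintype n] [Fintype m] (w : n → ℂ) (f : m → n → ℂ) :
    w ⬝ᵥ (∑ j, f j) = ∑ j, w ⬝ᵥ f j := by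
  simp [dotProduct, Finset.mul_sum]
  rw [Finset.sum_comm]

private lemma sum_dot {n m : Type*} [Fintype n] [Fintype m] (w : n → ℂ) (f : m → n → ℂ) :
    (∑ j, f j) ⬝ᵥ w = ∑ j, f j ⬝ᵥ w := by
  simp [dotProduct, Finset.sum_mul]
  rw [Finset.sum_comm]

private lemma sum_mulVec' {n m p : Type*} [Fintype n] [Fintype m]
    (f : m → Matrix p n ℂ) (w : n → ℂ) :
    (∑ j, f j).mulVec w = ∑ j, (f j).mulVec w := by
  funext i
  simp only [Matrix.mulVec, dotProduct, Finset.sum_apply, Matrix.sum_apply, Finset.sum_mul]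
  rw [Finset.sum_comm]

private lemma vecMulVec_mulVec' {n p : Type*} [Fintype n]
    (a : p → ℂ) (c : n → ℂ) (w : n → ℂ) :
    (Matrix.vecMulVec a c).mulVec w = (c ⬝ᵥ w) • a := by
  funext i
  simp [Matrix.mulVec, Matrix.vecMulVec, dotProduct, Finset.sum_mul, Finset.mul_sum,
    mul_comm, mul_assoc, mul_left_comm]

private lemma norm_le_of_orth {n : Type*} [Fintype n] (x w : n → ℂ)
    (h : star x ⬝ᵥ w = 0) :
    ∑ i, Complex.normSq (x i) ≤ ∑ i, Complex.normSq (x i + w i) := by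
  have key : ∑ i, Complex.normSq (x i + w i)
      = ∑ i, Complex.normSq (x i) + ∑ i, Complex.normSq (w i)
        + 2 * (star x ⬝ᵥ w).re := by
    have : (star x ⬝ᵥ w).re = ∑ i, ((x i) * (starRingEnd ℂ) (w i)).re := by
      simp only [dotProduct, Complex.re_sum, Pi.star_apply]
      refine Finset.sum_congr rfl fun i _ => ?_
      have : (starRingEnd ℂ) (x i * (starRingEnd ℂ) (w i)) = star (x i) * w i := by
        simp [mul_comm]
      rw [← Complex.conj_re (x i * (starRingEnd ℂ) (w i)), this]
    rw [this]
    rw [Finset.mul_sum, ← Finset.sum_add_distrib, ← Finset.sum_add_distrib]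
    exact Finset.sum_congr rfl fun i _ => Complex.normSq_add _ _
  rw [key, h]
  have h1 : (0:ℝ) ≤ ∑ i, Complex.normSq (w i) :=
    Finset.sum_nonneg fun i _ => Complex.normSq_nonneg _
  simp
  linarith

theorem hhl_pseudoinverse_min_norm_solution {M N : ℕ} (hMN : M ≤ N)
    (A : Matrix (Fin M) (Fin N) ℂ)
    (lam : Fin M → ℝ) (hlam : ∀ j, 0 < lam j)
    (u : Fin M → (Fin M → ℂ)) (v : Fin M → (Fin N → ℂ))
    (hu : ∀ j k, star (u j) ⬝ᵥ u k = if j = k then 1 else 0)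
    (hv : ∀ j k, star (v j) ⬝ᵥ v k = if j = k then 1 else 0)
    (hA : A = ∑ j, (lam j : ℂ) • Matrix.vecMulVec (u j) (star (v j)))
    (β : Fin M → ℂ) (b : Fin M → ℂ) (hb : b = ∑ j, β j • u j)
    (x : Fin N → ℂ) (hx : x = ∑ j, (β j / (lam j : ℂ)) • v j) :
    A.mulVec x = b ∧
    (Matrix.fromBlocks 0 A Aᴴ 0).mulVec (Sum.elim 0 x) = Sum.elim b 0 ∧
    (∀ y : Fin M ⊕ Fin N → ℂ,
      (Matrix.fromBlocks 0 A Aᴴ 0).mulVec y = Sum.elim b 0 →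
      ∑ i, Complex.normSq (Sum.elim (0 : Fin M → ℂ) x i) ≤ ∑ i, Complex.normSq (y i)) ∧
    (∀ x' : Fin N → ℂ, A.mulVec x' = b →
      ∑ i, Complex.normSq (x i) ≤ ∑ i, Complex.normSq (x' i)) := by
  have hlam0 : ∀ j, (lam j : ℂ) ≠ 0 := fun j => by
    exact_mod_cast (hlam j).ne'
  -- expansion of A.mulVec w
  have hAw : ∀ w : Fin N → ℂ,
      A.mulVec w = ∑ j, ((lam j : ℂ) * (star (v j) ⬝ᵥ w)) • u j := by
    intro w
    rw [hA, sum_mulVec']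
    refine Finset.sum_congr rfl fun j _ => ?_
    rw [Matrix.smul_mulVec, vecMulVec_mulVec', smul_smul]
  -- star v j ⬝ᵥ x = β j / lam j
  have hvx : ∀ j, star (v j) ⬝ᵥ x = β j / (lam j : ℂ) := by
    intro j
    rw [hx, dot_sum]
    have : ∀ k, star (v j) ⬝ᵥ ((β k / (lam k : ℂ)) • v k)
        = (β k / (lam k : ℂ)) * (if j = k then 1 else 0) := by
      intro k
      rw [dotProduct_smul, hv j k]
      rfl
    simp only [this, mul_ite, mul_one, mul_zero]
    simp
  -- first conjunct
  have h1 : A.mulVec x = b := by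
    rw [hAw, hb]
    refine Finset.sum_congr rfl fun j _ => ?_
    rw [hvx j, mul_div_cancel₀ _ (hlam0 j)]
  -- kernel fact
  have hker : ∀ w : Fin N → ℂ, A.mulVec w = 0 → ∀ j, star (v j) ⬝ᵥ w = 0 := by
    intro w hw j
    have h0 : star (u j) ⬝ᵥ A.mulVec w = 0 := by rw [hw]; simp
    rw [hAw, dot_sum] at h0
    have : ∀ k, star (u j) ⬝ᵥ (((lam k : ℂ) * (star (v k) ⬝ᵥ w)) • u k)
        = ((lam k : ℂ) * (star (v k) ⬝ᵥ w)) * (if j = k then 1 else 0) := by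
      intro k
      rw [dotProduct_smul, hu j k]
      rfl
    simp only [this, mul_ite, mul_one, mul_zero] at h0
    simp at h0
    rcases h0 with h0 | h0
    · exact absurd h0 (hlam j).ne'
    · exact h0
  -- orthogonality of x to kernel
  have hxker : ∀ w : Fin N → ℂ, A.mulVec w = 0 → star x ⬝ᵥ w = 0 := by
    intro w hw
    have hsx : star x = ∑ j, (starRingEnd ℂ) (β j / (lam j : ℂ)) • star (v j) := by
      rw [hx]
      funext i
      simp [Finset.sum_apply, map_sum]
    rw [hsx, sum_dot]
    refine Finset.sum_eq_zero fun j _ => ?_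
    rw [smul_dotProduct, hker w hw j, smul_zero]
  -- min norm among solutions of A x' = b
  have h4 : ∀ x' : Fin N → ℂ, A.mulVec x' = b →
      ∑ i, Complex.normSq (x i) ≤ ∑ i, Complex.normSq (x' i) := by
    intro x' hx'
    have hw : A.mulVec (x' - x) = 0 := by
      rw [Matrix.mulVec_sub, hx', h1, sub_self]
    have := norm_le_of_orth x (x' - x) (hxker _ hw)
    simpa using this
  refine ⟨h1, ?_, ?_, h4⟩
  · rw [Matrix.fromBlocks_mulVec]
    simp [h1]
  · intro y hy
    set y1 := y ∘ Sum.inl with hy1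
    set y2 := y ∘ Sum.inr with hy2
    have hyel : y = Sum.elim y1 y2 := by
      funext i; cases i <;> rfl
    rw [hyel, Matrix.fromBlocks_mulVec] at hy
    have htop : A.mulVec y2 = b := by
      have : ∀ i, ((0 : Matrix (Fin M) (Fin M) ℂ).mulVec y1 + A.mulVec y2) i = b i := by
        intro i
        have := congrFun hy (Sum.inl i)
        simpa using this
      funext i
      have := this i
      simpa [Matrix.zero_mulVec] using this
    have hle := h4 y2 htop
    calc ∑ i, Complex.normSq (Sum.elim (0 : Fin M → ℂ) x i)
        = ∑ i, Complex.normSq (x i) := by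
          rw [Fintype.sum_sum_type]; simp
      _ ≤ ∑ i, Complex.normSq (y2 i) := hle
      _ ≤ ∑ i, Complex.normSq (y1 i) + ∑ i, Complex.normSq (y2 i) := by
          have : (0:ℝ) ≤ ∑ i, Complex.normSq (y1 i) :=
            Finset.sum_nonneg fun i _ => Complex.normSq_nonneg _
          linarith
      _ = ∑ i, Complex.normSq (y i) := by
          rw [hyel, Fintype.sum_sum_type]; simp
end

section
/- If 2π ≤ δ ≤ T/10, then the phase estimation amplitude α with |α| = (√2|cos(δ/2)|/T)·|2 cos(δ/(2T)) sin(π/(2T))|/|sin((δ+π)/(2T)) sin((δ−π)/(2T))| satisfies |α| ≤ 8π/δ², and hence |α|² ≤ 64π²/δ⁴. -/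
open Real

/-! For `2π ≤ δ ≤ T/10` both angles `(δ ± π)/(2T)` lie in `[0, 3/40]`, where the cubic bound
`x - x³/6 ≤ sin x` gives `sin x ≥ (1 - 1/100) x`. Hence the denominator is at least a constant
times `(δ² - π²)/(4T²) ≥ 3δ²/(16T²)`, while `|sin x| ≤ |x|` bounds the numerator by `√2 π / T²`;
the `T²` cancel, and the remaining constant `16√2 / (3 (99/100)²)` is below `8`. -/

noncomputable def phaseEstimationAmplitude (T δ : ℝ) : ℝ :=
  √2 * |cos (δ / 2)| / T * |2 * cos (δ / (2 * T)) * sin (π / (2 * T))| /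
    |sin ((δ + π) / (2 * T)) * sin ((δ - π) / (2 * T))|

lemma mul_le_sin_of_sq_le {x c : ℝ} (hx : 0 ≤ x) (hxc : x ^ 2 ≤ 6 * (1 - c)) : c * x ≤ sin x := by
  have : x ^ 3 / 6 ≤ (1 - c) * x := by nlinarith
  linarith [sin_ge_sub_cube hx]

lemma phaseEstimation_numerator_le {T : ℝ} (hT : 0 < T) (u v : ℝ) :
    √2 * |cos u| / T * |2 * cos v * sin (π / (2 * T))| ≤ √2 * π / T ^ 2 := by
  have hsin : |2 * cos v * sin (π / (2 * T))| ≤ π / T := by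
    rw [abs_mul, abs_mul, abs_two]
    calc 2 * |cos v| * |sin (π / (2 * T))| ≤ 2 * 1 * |π / (2 * T)| :=
          mul_le_mul (mul_le_mul_of_nonneg_left (abs_cos_le_one v) zero_le_two) abs_sin_le_abs
            (abs_nonneg _) (by positivity)
      _ = π / T := by rw [abs_of_pos (by positivity)]; field_simp
  calc √2 * |cos u| / T * |2 * cos v * sin (π / (2 * T))| ≤ √2 * 1 / T * (π / T) := by
        gcongr
        exact abs_cos_le_one u
    _ = √2 * π / T ^ 2 := by ring

lemma phaseEstimation_denominator_ge {T δ : ℝ} (hT : 0 < T) (hδ1 : 2 * π ≤ δ) (hδ2 : δ ≤ T / 10) :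
    3 * (99 / 100) ^ 2 * δ ^ 2 / (16 * T ^ 2) ≤
      |sin ((δ + π) / (2 * T)) * sin ((δ - π) / (2 * T))| := by
  have hπ := pi_pos
  have hba : (δ - π) / (2 * T) ≤ (δ + π) / (2 * T) := by gcongr; linarith
  set a := (δ + π) / (2 * T)
  set b := (δ - π) / (2 * T)
  have hb : 0 ≤ b := div_nonneg (by linarith) (by positivity)
  have ha₀ : 0 ≤ a := hb.trans hba
  have ha : a ≤ 3 / 40 := by rw [div_le_iff₀ (by positivity)]; linarith
  have hsina : 99 / 100 * a ≤ sin a :=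
    mul_le_sin_of_sq_le ha₀ (by nlinarith)
  have hsinb : 99 / 100 * b ≤ sin b :=
    mul_le_sin_of_sq_le hb (by nlinarith)
  have hab : 3 * δ ^ 2 / (16 * T ^ 2) ≤ a * b := by
    rw [div_mul_div_comm, div_le_div_iff₀ (by positivity) (by positivity)]
    have hδπ : 4 * π ^ 2 ≤ δ ^ 2 := by nlinarith
    nlinarith [mul_le_mul_of_nonneg_right hδπ (sq_nonneg T)]
  rw [abs_of_nonneg (mul_nonneg (by linarith) (by linarith))]
  calc 3 * (99 / 100) ^ 2 * δ ^ 2 / (16 * T ^ 2)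
      = (99 / 100) ^ 2 * (3 * δ ^ 2 / (16 * T ^ 2)) := by ring
    _ ≤ (99 / 100) ^ 2 * (a * b) := by gcongr
    _ = (99 / 100 * a) * (99 / 100 * b) := by ring
    _ ≤ sin a * sin b := mul_le_mul hsina hsinb (by positivity) (by linarith)

lemma phaseEstimationAmplitude_le {T δ : ℝ} (hδ1 : 2 * π ≤ δ) (hδ2 : δ ≤ T / 10) :
    phaseEstimationAmplitude T δ ≤ 8 * π / δ ^ 2 := by
  have hπ := pi_pos
  have hT : 0 < T := by linarith
  have hδ : 0 < δ := by linarith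
  have hsqrt2 : √2 ≤ 3 * (99 / 100) ^ 2 / 2 := by
    rw [sqrt_le_left (by norm_num)]; norm_num
  calc phaseEstimationAmplitude T δ
      ≤ (√2 * π / T ^ 2) / (3 * (99 / 100) ^ 2 * δ ^ 2 / (16 * T ^ 2)) :=
        div_le_div₀ (by positivity) (phaseEstimation_numerator_le hT _ _) (by positivity)
          (phaseEstimation_denominator_ge hT hδ1 hδ2)
    _ = √2 * (π / δ ^ 2) * (16 / (3 * (99 / 100) ^ 2)) := by field_simp
    _ ≤ 3 * (99 / 100) ^ 2 / 2 * (π / δ ^ 2) * (16 / (3 * (99 / 100) ^ 2)) := by gcongr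
    _ = 8 * π / δ ^ 2 := by ring

theorem hhl_phase_estimation_amplitude_bound_general (T : ℕ) (δ : ℝ)
    (hδ1 : 2 * Real.pi ≤ δ) (hδ2 : δ ≤ (T : ℝ) / 10) :
    Real.sqrt 2 * |Real.cos (δ / 2)| / (T : ℝ) *
        |2 * Real.cos (δ / (2 * (T : ℝ))) * Real.sin (Real.pi / (2 * (T : ℝ)))| /
        |Real.sin ((δ + Real.pi) / (2 * (T : ℝ))) *
          Real.sin ((δ - Real.pi) / (2 * (T : ℝ)))| ≤ 8 * Real.pi / δ ^ 2 ∧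
    (Real.sqrt 2 * |Real.cos (δ / 2)| / (T : ℝ) *
        |2 * Real.cos (δ / (2 * (T : ℝ))) * Real.sin (Real.pi / (2 * (T : ℝ)))| /
        |Real.sin ((δ + Real.pi) / (2 * (T : ℝ))) *
          Real.sin ((δ - Real.pi) / (2 * (T : ℝ)))|) ^ 2 ≤
      64 * Real.pi ^ 2 / δ ^ 4 := by
  have hα : phaseEstimationAmplitude T δ ≤ 8 * π / δ ^ 2 := phaseEstimationAmplitude_le hδ1 hδ2
  have hα₀ : 0 ≤ phaseEstimationAmplitude T δ := by unfold phaseEstimationAmplitude; positivity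
  refine ⟨hα, ?_⟩
  calc phaseEstimationAmplitude T δ ^ 2 ≤ (8 * π / δ ^ 2) ^ 2 := pow_le_pow_left₀ hα₀ hα 2
    _ = 64 * π ^ 2 / δ ^ 4 := by ring

theorem hhl_phase_estimation_amplitude_bound (T : ℕ) (hT : 1 ≤ T) (δ : ℝ)
    (hδ1 : 2 * Real.pi ≤ δ) (hδ2 : δ ≤ (T : ℝ) / 10) :
    Real.sqrt 2 * |Real.cos (δ / 2)| / (T : ℝ) *
        |2 * Real.cos (δ / (2 * (T : ℝ))) * Real.sin (Real.pi / (2 * (T : ℝ)))| /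
        |Real.sin ((δ + Real.pi) / (2 * (T : ℝ))) *
          Real.sin ((δ - Real.pi) / (2 * (T : ℝ)))| ≤ 8 * Real.pi / δ ^ 2 ∧
    (Real.sqrt 2 * |Real.cos (δ / 2)| / (T : ℝ) *
        |2 * Real.cos (δ / (2 * (T : ℝ))) * Real.sin (Real.pi / (2 * (T : ℝ)))| /
        |Real.sin ((δ + Real.pi) / (2 * (T : ℝ))) *
          Real.sin ((δ - Real.pi) / (2 * (T : ℝ)))|) ^ 2 ≤
      64 * Real.pi ^ 2 / δ ^ 4 :=
  hhl_phase_estimation_amplitude_bound_general T δ hδ1 hδ2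
end
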